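/- arXiv:1509.08124 — 2 statements merged into one kernel-verified Lean document; each statement's English description precedes it below -/
import Mathlib

section
/- The following algebraic identity holds: (1/|A|²) Σ_{j∈A} Σ_{k∈A} [ r_{iijk} + (1/4)·r_{ij}·r_{ik}·(r_{iiii} + r_{iijj} + r_{iikk} + r_{jjkk}) − (1/2)·r_{ij}·(r_{iiik} + r_{ijjk}) − (1/2)·r_{ik}·(r_{iiij} + r_{ijkk}) ] = (1/n) Σ_{ℓ=1}^n { (r_A²/4)·u_{iℓ}⁴ − r_A·W_ℓ·u_{iℓ}³ + ((r_A·Y_ℓ)/2 + W_ℓ²)·u_{iℓ}² − W_ℓ·Y_ℓ·u_{iℓ} + Y_ℓ²/4 }. -/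
/-- `r_{jk} = Σ_ℓ u_{jℓ}·u_{kℓ}`. -/
noncomputable def rr {n p : ℕ} (u : Fin p → Fin n → ℝ) (j k : Fin p) : ℝ :=
  ∑ ℓ, u j ℓ * u k ℓ

/-- `r_{jkhm} = (1/n) Σ_ℓ u_{jℓ}·u_{kℓ}·u_{hℓ}·u_{mℓ}`. -/
noncomputable def r4 {n p : ℕ} (u : Fin p → Fin n → ℝ) (j k h m : Fin p) : ℝ :=
  (n : ℝ)⁻¹ * ∑ ℓ, u j ℓ * u k ℓ * u h ℓ * u m ℓ

/-- `W_ℓ = (1/|A|) Σ_{j∈A} u_{jℓ}`. -/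
noncomputable def Wvec {n p : ℕ} (u : Fin p → Fin n → ℝ) (A : Finset (Fin p)) (ℓ : Fin n) : ℝ :=
  (A.card : ℝ)⁻¹ * ∑ j ∈ A, u j ℓ

/-- `Y_ℓ = (1/|A|) Σ_{j∈A} r_{ij}·u_{jℓ}²`. -/
noncomputable def Yvec {n p : ℕ} (u : Fin p → Fin n → ℝ) (i : Fin p) (A : Finset (Fin p)) (ℓ : Fin n) : ℝ :=
  (A.card : ℝ)⁻¹ * ∑ j ∈ A, rr u i j * (u j ℓ) ^ 2

/-- `r_A = (1/|A|) Σ_{j∈A} r_{ij}`. -/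
noncomputable def rAvg {n p : ℕ} (u : Fin p → Fin n → ℝ) (i : Fin p) (A : Finset (Fin p)) : ℝ :=
  (A.card : ℝ)⁻¹ * ∑ j ∈ A, rr u i j

/-!
With `a_{jℓ} = u_{iℓ} u_{jℓ} - r_{ij} (u_{iℓ}² + u_{jℓ}²) / 2`, the `(j, k)` summand on the left
is the empirical second moment `(1/n) Σ_ℓ a_{jℓ} a_{kℓ}`. Averaging over `j, k ∈ A` and swapping
sums gives `(1/n) Σ_ℓ (mean_{j ∈ A} a_{jℓ})²`, and `mean_{j ∈ A} a_{jℓ} = u_{iℓ} W_ℓ - r_A u_{iℓ}² / 2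
- Y_ℓ / 2`; expanding this square is the right-hand side.
-/

lemma Finset.sum_sum_sum_mul_eq_sum_sq {ι κ R : Type*} [CommSemiring R]
    (s : Finset ι) (t : Finset κ) (a : ι → κ → R) :
    ∑ j ∈ s, ∑ k ∈ s, ∑ ℓ ∈ t, a j ℓ * a k ℓ = ∑ ℓ ∈ t, (∑ j ∈ s, a j ℓ) ^ 2 := by
  simp_rw [sq, Finset.sum_mul_sum]
  rw [Finset.sum_comm (s := t)]
  exact Finset.sum_congr rfl fun _ _ => Finset.sum_comm

noncomputable def pairTerm {n p : ℕ} (u : Fin p → Fin n → ℝ) (i j : Fin p) (ℓ : Fin n) : ℝ :=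
  u i ℓ * u j ℓ - rr u i j / 2 * ((u i ℓ) ^ 2 + (u j ℓ) ^ 2)

lemma r4_combination_eq_mean_pairTerm_mul {n p : ℕ} (u : Fin p → Fin n → ℝ) (i j k : Fin p) :
    r4 u i i j k +
        (1 / 4) * rr u i j * rr u i k *
          (r4 u i i i i + r4 u i i j j + r4 u i i k k + r4 u j j k k) -
        (1 / 2) * rr u i j * (r4 u i i i k + r4 u i j j k) -
        (1 / 2) * rr u i k * (r4 u i i i j + r4 u i j k k) =
      (n : ℝ)⁻¹ * ∑ ℓ, pairTerm u i j ℓ * pairTerm u i k ℓ := by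
  simp only [r4, Finset.mul_sum, ← Finset.sum_add_distrib, ← Finset.sum_sub_distrib]
  exact Finset.sum_congr rfl fun ℓ _ => by rw [pairTerm, pairTerm]; ring

lemma average_pairTerm {n p : ℕ} (u : Fin p → Fin n → ℝ) (i : Fin p) (A : Finset (Fin p))
    (ℓ : Fin n) :
    (A.card : ℝ)⁻¹ * ∑ j ∈ A, pairTerm u i j ℓ =
      u i ℓ * Wvec u A ℓ - rAvg u i A / 2 * (u i ℓ) ^ 2 - Yvec u i A ℓ / 2 := by
  have hsplit : ∑ j ∈ A, pairTerm u i j ℓ = u i ℓ * ∑ j ∈ A, u j ℓ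
      - (u i ℓ) ^ 2 / 2 * ∑ j ∈ A, rr u i j - (∑ j ∈ A, rr u i j * (u j ℓ) ^ 2) / 2 := by
    simp only [pairTerm, Finset.mul_sum, Finset.sum_div, ← Finset.sum_sub_distrib]
    exact Finset.sum_congr rfl fun j _ => by ring
  rw [hsplit, Wvec, rAvg, Yvec]
  ring

theorem stmt5_general {n p : ℕ}
    (u : Fin p → Fin n → ℝ) (i : Fin p) (A : Finset (Fin p)) :
    ((A.card : ℝ)⁻¹) ^ 2 * ∑ j ∈ A, ∑ k ∈ A,
      (r4 u i i j k +
        (1 / 4) * rr u i j * rr u i k *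
          (r4 u i i i i + r4 u i i j j + r4 u i i k k + r4 u j j k k) -
        (1 / 2) * rr u i j * (r4 u i i i k + r4 u i j j k) -
        (1 / 2) * rr u i k * (r4 u i i i j + r4 u i j k k)) =
    (n : ℝ)⁻¹ * ∑ ℓ : Fin n,
      ((rAvg u i A) ^ 2 / 4 * (u i ℓ) ^ 4 -
        rAvg u i A * Wvec u A ℓ * (u i ℓ) ^ 3 +
        (rAvg u i A * Yvec u i A ℓ / 2 + (Wvec u A ℓ) ^ 2) * (u i ℓ) ^ 2 -
        Wvec u A ℓ * Yvec u i A ℓ * u i ℓ + (Yvec u i A ℓ) ^ 2 / 4) := by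
  simp_rw [r4_combination_eq_mean_pairTerm_mul, ← Finset.mul_sum,
    Finset.sum_sum_sum_mul_eq_sum_sq, Finset.mul_sum]
  refine Finset.sum_congr rfl fun ℓ _ => ?_
  have hsq := congrArg (· ^ 2) (average_pairTerm u i A ℓ)
  simp only [mul_pow] at hsq
  linear_combination (n : ℝ)⁻¹ * hsq

/-- The algebraic identity expressing the variance estimator `τ̂` in terms of the vectors
`W`, `Y` and `u_i`. -/
theorem stmt5 {n p : ℕ} (hn : 1 ≤ n) (hp : 1 ≤ p)
    (u : Fin p → Fin n → ℝ) (i : Fin p) (A : Finset (Fin p)) (hA : A.Nonempty) :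
    ((A.card : ℝ)⁻¹) ^ 2 * ∑ j ∈ A, ∑ k ∈ A,
      (r4 u i i j k +
        (1 / 4) * rr u i j * rr u i k *
          (r4 u i i i i + r4 u i i j j + r4 u i i k k + r4 u j j k k) -
        (1 / 2) * rr u i j * (r4 u i i i k + r4 u i j j k) -
        (1 / 2) * rr u i k * (r4 u i i i j + r4 u i j k k)) =
    (n : ℝ)⁻¹ * ∑ ℓ : Fin n,
      ((rAvg u i A) ^ 2 / 4 * (u i ℓ) ^ 4 -
        rAvg u i A * Wvec u A ℓ * (u i ℓ) ^ 3 +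
        (rAvg u i A * Yvec u i A ℓ / 2 + (Wvec u A ℓ) ^ 2) * (u i ℓ) ^ 2 -
        Wvec u A ℓ * Yvec u i A ℓ * u i ℓ + (Yvec u i A ℓ) ^ 2 / 4) :=
  stmt5_general u i A
end

section
/- Let u_i and u_j (j ∈ A) be standardized vectors in ℝ^(n₁), and let v_i and v_j (j ∈ A) be standardized vectors in ℝ^(n₂). Let W₁ = (1/|A|) Σ_{j∈A} u_j and W₂ = (1/|A|) Σ_{j∈A} v_j, and assume W₁ ≠ 0 and W₂ ≠ 0. Define Δ̂(i,A) = (1/|A|) Σ_{j∈A} ( r̂(u_i, u_j) − r̂(v_i, v_j) ). Then Δ̂(i,A) = ‖W₁‖ · r̂(W₁, u_i) − ‖W₂‖ · r̂(W₂, v_i), where ‖·‖ denotes the Euclidean norm. -/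
/-!
For a centred vector `W`, `‖W‖ · r̂(W, x) = ⟨W, x⟩ / ‖x - x̄‖`, which is linear in `W`.
A standardized `u_j` is centred of norm `1`, so `r̂(u_i, u_j) = ⟨u_j, u_i⟩ / ‖u_i - ū_i‖`, and
averaging over `j ∈ A` replaces `u_j` by the centroid `W₁`, which is again centred.
-/

/-- A vector `u ∈ ℝⁿ` is standardized if it has zero coordinate sum and unit sum of squares. -/
def IsStandardized {n : ℕ} (u : Fin n → ℝ) : Prop :=
  (∑ ℓ, u ℓ = 0) ∧ (∑ ℓ, (u ℓ) ^ 2 = 1)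

/-- The sample correlation of two vectors in `ℝⁿ`. -/
noncomputable def sampleCorr {n : ℕ} (x y : Fin n → ℝ) : ℝ :=
  (∑ ℓ, (x ℓ - (∑ m, x m) / n) * (y ℓ - (∑ m, y m) / n)) /
    Real.sqrt ((∑ ℓ, (x ℓ - (∑ m, x m) / n) ^ 2) * (∑ ℓ, (y ℓ - (∑ m, y m) / n) ^ 2))

/-- The Euclidean norm on `ℝⁿ`. -/
noncomputable def euclNorm {n : ℕ} (x : Fin n → ℝ) : ℝ :=
  Real.sqrt (∑ ℓ, (x ℓ) ^ 2)

section SampleCorr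

variable {n : ℕ}

theorem sampleCorr_comm (x y : Fin n → ℝ) : sampleCorr x y = sampleCorr y x := by
  simp only [sampleCorr, mul_comm]

theorem euclNorm_eq_one {u : Fin n → ℝ} (hu : IsStandardized u) : euclNorm u = 1 := by
  simp [euclNorm, hu.2]

theorem euclNorm_mul_sampleCorr_of_sum_eq_zero {W : Fin n → ℝ} (hW : ∑ ℓ, W ℓ = 0)
    (x : Fin n → ℝ) :
    euclNorm W * sampleCorr W x =
      (∑ ℓ, W ℓ * x ℓ) / Real.sqrt (∑ ℓ, (x ℓ - (∑ m, x m) / n) ^ 2) := by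
  rcases eq_or_ne W 0 with rfl | hW0
  · simp [euclNorm]
  have hnorm : euclNorm W ≠ 0 := by
    obtain ⟨ℓ, hℓ⟩ := Function.ne_iff.1 hW0
    refine (Real.sqrt_pos.2 ?_).ne'
    exact Finset.sum_pos' (fun _ _ => sq_nonneg _) ⟨ℓ, Finset.mem_univ _, sq_pos_of_ne_zero hℓ⟩
  have hcross : ∑ ℓ, W ℓ * (x ℓ - (∑ m, x m) / n) = ∑ ℓ, W ℓ * x ℓ := by
    simp only [mul_sub, Finset.sum_sub_distrib, ← Finset.sum_mul, hW, zero_mul, sub_zero]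
  simp only [sampleCorr, hW, zero_div, sub_zero, hcross]
  rw [Real.sqrt_mul (Finset.sum_nonneg fun _ _ => sq_nonneg _), ← euclNorm,
    ← mul_div_assoc, mul_div_mul_left _ _ hnorm]

theorem inv_card_mul_sum_sampleCorr {ι : Type*} (A : Finset ι) (u : ι → Fin n → ℝ)
    (hu : ∀ j ∈ A, IsStandardized (u j)) (x : Fin n → ℝ) :
    (A.card : ℝ)⁻¹ * ∑ j ∈ A, sampleCorr x (u j) =
      euclNorm (fun ℓ => (A.card : ℝ)⁻¹ * ∑ j ∈ A, u j ℓ) *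
        sampleCorr (fun ℓ => (A.card : ℝ)⁻¹ * ∑ j ∈ A, u j ℓ) x := by
  have hcentroid : ∑ ℓ, (A.card : ℝ)⁻¹ * ∑ j ∈ A, u j ℓ = 0 := by
    rw [← Finset.mul_sum, Finset.sum_comm, Finset.sum_congr rfl fun j hj => (hu j hj).1]
    simp
  have hterm : ∀ j ∈ A, sampleCorr x (u j) =
      (∑ ℓ, u j ℓ * x ℓ) / Real.sqrt (∑ ℓ, (x ℓ - (∑ m, x m) / n) ^ 2) := fun j hj => by
    rw [sampleCorr_comm, ← one_mul (sampleCorr _ _), ← euclNorm_eq_one (hu j hj),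
      euclNorm_mul_sampleCorr_of_sum_eq_zero (hu j hj).1]
  rw [Finset.sum_congr rfl hterm, euclNorm_mul_sampleCorr_of_sum_eq_zero hcentroid,
    ← Finset.sum_div, Finset.sum_comm, ← mul_div_assoc, Finset.mul_sum]
  simp only [Finset.sum_mul, Finset.mul_sum, mul_assoc]

end SampleCorr

theorem stmt12_general {n₁ n₂ : ℕ} {ι : Type*}
    (A : Finset ι)
    (ui : Fin n₁ → ℝ) (u : ι → Fin n₁ → ℝ)
    (vi : Fin n₂ → ℝ) (v : ι → Fin n₂ → ℝ)
    (hu : ∀ j ∈ A, IsStandardized (u j))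
    (hv : ∀ j ∈ A, IsStandardized (v j))
    (W₁ : Fin n₁ → ℝ) (hW₁ : W₁ = fun ℓ => (A.card : ℝ)⁻¹ * ∑ j ∈ A, u j ℓ)
    (W₂ : Fin n₂ → ℝ) (hW₂ : W₂ = fun ℓ => (A.card : ℝ)⁻¹ * ∑ j ∈ A, v j ℓ) :
    (A.card : ℝ)⁻¹ * ∑ j ∈ A, (sampleCorr ui (u j) - sampleCorr vi (v j)) =
      euclNorm W₁ * sampleCorr W₁ ui - euclNorm W₂ * sampleCorr W₂ vi := by
  subst hW₁ hW₂
  rw [Finset.sum_sub_distrib, mul_sub, inv_card_mul_sum_sampleCorr A u hu,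
    inv_card_mul_sum_sampleCorr A v hv]

/-- Geometric form of the test statistic: for standardized vectors `u_i, (u_j)_{j∈A}` in
`ℝ^{n₁}` and `v_i, (v_j)_{j∈A}` in `ℝ^{n₂}` with nonzero centroids `W₁, W₂`,
`Δ̂(i,A) = ‖W₁‖·r̂(W₁,u_i) − ‖W₂‖·r̂(W₂,v_i)`. -/
theorem stmt12 {n₁ n₂ : ℕ} (hn₁ : 2 ≤ n₁) (hn₂ : 2 ≤ n₂) {ι : Type*}
    (A : Finset ι) (hA : A.Nonempty)
    (ui : Fin n₁ → ℝ) (u : ι → Fin n₁ → ℝ)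
    (vi : Fin n₂ → ℝ) (v : ι → Fin n₂ → ℝ)
    (hui : IsStandardized ui) (hu : ∀ j ∈ A, IsStandardized (u j))
    (hvi : IsStandardized vi) (hv : ∀ j ∈ A, IsStandardized (v j))
    (W₁ : Fin n₁ → ℝ) (hW₁ : W₁ = fun ℓ => (A.card : ℝ)⁻¹ * ∑ j ∈ A, u j ℓ)
    (W₂ : Fin n₂ → ℝ) (hW₂ : W₂ = fun ℓ => (A.card : ℝ)⁻¹ * ∑ j ∈ A, v j ℓ)
    (hW₁0 : W₁ ≠ 0) (hW₂0 : W₂ ≠ 0) :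
    (A.card : ℝ)⁻¹ * ∑ j ∈ A, (sampleCorr ui (u j) - sampleCorr vi (v j)) =
      euclNorm W₁ * sampleCorr W₁ ui - euclNorm W₂ * sampleCorr W₂ vi :=
  stmt12_general A ui u vi v hu hv W₁ hW₁ W₂ hW₂
end
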